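/- Derivative identity for hat-function imbeddings (formula (6.8) of the paper): For every finitely supported grid function u : ℤ^d → ℝ and every i ∈ {1,…,d}, the i-th partial derivative of the hat-function imbedding u(n) = Σ_m u_m ψ_m satisfies, for almost every x ∈ ℝ^d, ∂_i u(n)(x) = Σ_{m∈ℤ^d} (U_i u)_m · χ_{m,i,+}(x). -/

import Mathlib

open MeasureTheory

noncomputable section

/-- The canonical hat function on `ℝ`. -/
def hat (t : ℝ) : ℝ := max 0 (1 - |t|)

/-- The `i`-th coordinate of the grid-knot `x_m = v + h * r * m`. -/
def gridKnot (d : ℕ) (h : ℝ) (r : Fin d → ℕ) (v : Fin d → ℝ) (m : Fin d → ℤ) (i : Fin d) : ℝ :=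
  v i + h * (r i : ℝ) * (m i : ℝ)

/-- The `d`-dimensional hat function centered at the grid-knot `x_m`. -/
def psi (d : ℕ) (h : ℝ) (r : Fin d → ℕ) (v : Fin d → ℝ) (m : Fin d → ℤ) (x : Fin d → ℝ) : ℝ :=
  ∏ i, hat ((x i - gridKnot d h r v m i) / (h * (r i : ℝ)))

/-- The hat-function imbedding `u(n) = Σ_m u_m ψ_m`. -/
def imbed (d : ℕ) (h : ℝ) (r : Fin d → ℕ) (v : Fin d → ℝ) (u : (Fin d → ℤ) → ℝ)
    (x : Fin d → ℝ) : ℝ :=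
  ∑' m : Fin d → ℤ, u m * psi d h r v m x

/-- `vol(R) = r₁ ⋯ r_d`. -/
def volR (d : ℕ) (r : Fin d → ℕ) : ℝ := ∏ i, (r i : ℝ)

/-- Forward finite difference `(U_i u)_m = (u_{m+e_i} - u_m)/(r_i h)`. -/
def fdiff (d : ℕ) (h : ℝ) (r : Fin d → ℕ) (u : (Fin d → ℤ) → ℝ) (i : Fin d)
    (m : Fin d → ℤ) : ℝ :=
  (u (m + Pi.single i 1) - u m) / ((r i : ℝ) * h)

/-- The discrete norm `|u|²_{R2} = vol(R) Σ_m u_m²`. -/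
def norm2R (d : ℕ) (r : Fin d → ℕ) (u : (Fin d → ℤ) → ℝ) : ℝ :=
  volR d r * ∑' m : Fin d → ℤ, u m ^ 2

/-- The discrete Dirichlet form `q_R(u) = vol(R) Σ_i Σ_m (U_i u)_m²`. -/
def qR (d : ℕ) (h : ℝ) (r : Fin d → ℕ) (u : (Fin d → ℤ) → ℝ) : ℝ :=
  volR d r * ∑ i : Fin d, ∑' m : Fin d → ℤ, (fdiff d h r u i m) ^ 2


/-- `χ_{m,i,+}(x) = 1_{[(x_m)_i, (x_m)_i + r_i h)}(x_i) ∏_{j≠i} χ((x_j - (x_m)_j)/(h r_j))`. -/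
def chiPlus (d : ℕ) (h : ℝ) (r : Fin d → ℕ) (v : Fin d → ℝ) (m : Fin d → ℤ) (i : Fin d)
    (x : Fin d → ℝ) : ℝ :=
  (if gridKnot d h r v m i ≤ x i ∧ x i < gridKnot d h r v m i + (r i : ℝ) * h then 1 else 0) *
    ∏ j ∈ Finset.univ.erase i, hat ((x j - gridKnot d h r v m j) / (h * (r j : ℝ)))

/-! Along the line through `x` in direction `e_i`, each `ψ_m` is `χ((x_i - (x_m)_i)/(h r_i))` times
a factor that does not move, and `χ` is affine between consecutive integers. So as soon as `x_i` is
not a knot coordinate `v_i + h r_i n` (which fails only on a null set), `ψ_m` has the line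
derivative `(χ_{m-e_i,i,+}(x) - χ_{m,i,+}(x))/(r_i h)`, the half-open intervals in `χ_{m,i,+}`
matching the right derivative of `χ`. Summing against the finitely supported `u` and shifting
the index of the first sum (summation by parts) gives `Σ_m (U_i u)_m χ_{m,i,+}(x)`. -/

open Set

def hatDeriv (s : ℝ) : ℝ :=
  (if -1 ≤ s ∧ s < 0 then 1 else 0) - (if 0 ≤ s ∧ s < 1 then 1 else 0)

lemma hat_eq_zero_of_one_le_abs {t : ℝ} (ht : 1 ≤ |t|) : hat t = 0 :=
  max_eq_left (by linarith)

lemma hat_eq_one_add_of_nonpos {t : ℝ} (h₁ : -1 ≤ t) (h₂ : t ≤ 0) : hat t = 1 + t := by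
  rw [hat, abs_of_nonpos h₂, max_eq_right (by linarith)]
  ring

lemma hat_eq_one_sub_of_nonneg {t : ℝ} (h₁ : 0 ≤ t) (h₂ : t ≤ 1) : hat t = 1 - t := by
  rw [hat, abs_of_nonneg h₁, max_eq_right (by linarith)]

lemma hasDerivAt_hat {s : ℝ} (hs : ∀ n : ℤ, s ≠ n) : HasDerivAt hat (hatDeriv s) s := by
  have h₁ : s ≠ -1 := by exact_mod_cast hs (-1)
  have h₀ : s ≠ 0 := by exact_mod_cast hs 0
  have h₂ : s ≠ 1 := by exact_mod_cast hs 1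
  rcases h₀.lt_or_gt with hneg | hpos
  · rcases h₁.lt_or_gt with hlt | hgt
    · have hval : hatDeriv s = 0 := by
        rw [hatDeriv, if_neg (by intro h; linarith [h.1]), if_neg (by intro h; linarith [h.1]),
          sub_zero]
      rw [hval]
      refine (hasDerivAt_const s 0).congr_of_eventuallyEq ?_
      filter_upwards [Iio_mem_nhds hlt] with t (ht : t < -1)
      exact hat_eq_zero_of_one_le_abs (by rw [abs_of_neg (by linarith)]; linarith)
    · have hval : hatDeriv s = 1 := by
        rw [hatDeriv, if_pos ⟨hgt.le, hneg⟩, if_neg (by intro h; linarith [h.1]), sub_zero]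
      rw [hval]
      refine ((hasDerivAt_id s).const_add 1).congr_of_eventuallyEq ?_
      filter_upwards [Ioo_mem_nhds hgt hneg] with t ht
      exact hat_eq_one_add_of_nonpos ht.1.le ht.2.le
  · rcases h₂.lt_or_gt with hlt | hgt
    · have hval : hatDeriv s = -1 := by
        rw [hatDeriv, if_neg (by intro h; linarith [h.2]), if_pos ⟨hpos.le, hlt⟩, zero_sub]
      rw [hval]
      refine ((hasDerivAt_id s).const_sub 1).congr_of_eventuallyEq ?_
      filter_upwards [Ioo_mem_nhds hpos hlt] with t ht
      exact hat_eq_one_sub_of_nonneg ht.1.le ht.2.le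
    · have hval : hatDeriv s = 0 := by
        rw [hatDeriv, if_neg (by intro h; linarith [h.2]), if_neg (by intro h; linarith [h.2]),
          sub_zero]
      rw [hval]
      refine (hasDerivAt_const s 0).congr_of_eventuallyEq ?_
      filter_upwards [Ioi_mem_nhds hgt] with t (ht : 1 < t)
      exact hat_eq_zero_of_one_le_abs (by rw [abs_of_pos (by linarith)]; linarith)

lemma hatDeriv_sub_div {c : ℝ} (hc : 0 < c) (y a : ℝ) :
    hatDeriv ((y - a) / c) =
      (if a - c ≤ y ∧ y < a then 1 else 0) - (if a ≤ y ∧ y < a + c then 1 else 0) := by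
  have h₁ : (-1 ≤ (y - a) / c ∧ (y - a) / c < 0) ↔ (a - c ≤ y ∧ y < a) := by
    rw [le_div_iff₀ hc, div_lt_iff₀ hc]
    constructor <;> rintro ⟨_, _⟩ <;> constructor <;> linarith
  have h₂ : (0 ≤ (y - a) / c ∧ (y - a) / c < 1) ↔ (a ≤ y ∧ y < a + c) := by
    rw [le_div_iff₀ hc, div_lt_iff₀ hc]
    constructor <;> rintro ⟨_, _⟩ <;> constructor <;> linarith
  simp only [hatDeriv, h₁, h₂]

lemma tsum_mul_sub_shift_eq {G : Type*} [AddCommGroup G] {u : G → ℝ}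
    (hu : (Function.support u).Finite) (χ : G → ℝ) (e : G) :
    ∑' m, u m * (χ (m - e) - χ m) = ∑' m, (u (m + e) - u m) * χ m := by
  have hsum : ∀ {w : G → ℝ} (g : G → ℝ), (Function.support w).Finite →
      Summable fun m => w m * g m :=
    fun _ hw => summable_of_hasFiniteSupport (hw.subset (Function.support_mul_subset_left _ _))
  have hu' : (Function.support fun m => u (m + e)).Finite :=
    hu.preimage (add_left_injective e).injOn
  have hshift : ∑' m, u m * χ (m - e) = ∑' m, u (m + e) * χ m := by
    rw [← (Equiv.subRight e).tsum_eq (fun m => u (m + e) * χ m)]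
    simp
  simp only [mul_sub, sub_mul]
  rw [(hsum _ hu).tsum_sub (hsum _ hu), (hsum _ hu').tsum_sub (hsum _ hu), hshift]

lemma hasLineDerivAt_tsum_mul {ι E : Type*} [NormedAddCommGroup E] [NormedSpace ℝ E]
    {u : ι → ℝ} (hu : (Function.support u).Finite) {f : ι → E → ℝ} {f' : ι → ℝ} {x v : E}
    (hf : ∀ m, HasLineDerivAt ℝ (f m) (f' m) x v) :
    HasLineDerivAt ℝ (fun y => ∑' m, u m * f m y) (∑' m, u m * f' m) x v := by
  have hzero : ∀ {w : ι → ℝ}, ∀ m ∉ hu.toFinset, u m * w m = 0 := fun m hm => by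
    rw [hu.mem_toFinset, Function.mem_support, not_not] at hm
    rw [hm, zero_mul]
  simp only [HasLineDerivAt, tsum_eq_sum hzero]
  exact HasDerivAt.fun_sum fun m _ => (hf m).const_mul (u m)

lemma ae_forall_apply_ne {ι κ : Type*} [Fintype ι] [Countable κ] (i : ι) (a : κ → ℝ) :
    ∀ᵐ x : ι → ℝ, ∀ n, x i ≠ a n := by
  rw [ae_all_iff, volume_pi]
  exact fun n => Measure.ae_eval_ne (α := fun _ => ℝ) _ i (a n)

section Grid

variable {d : ℕ} {h : ℝ} {r : Fin d → ℕ} {v : Fin d → ℝ} {m : Fin d → ℤ} {i : Fin d}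

lemma gridKnot_sub_single_self :
    gridKnot d h r v (m - Pi.single i 1) i = gridKnot d h r v m i - r i * h := by
  simp only [gridKnot, Pi.sub_apply, Pi.single_eq_same]
  push_cast
  ring

lemma gridKnot_sub_single_of_ne {j : Fin d} (hj : j ≠ i) :
    gridKnot d h r v (m - Pi.single i 1) j = gridKnot d h r v m j := by
  simp [gridKnot, hj]

lemma psi_add_smul_single (x : Fin d → ℝ) (t : ℝ) :
    psi d h r v m (x + t • Pi.single i 1) =
      hat ((x i + t - gridKnot d h r v m i) / (h * r i)) *
        ∏ j ∈ Finset.univ.erase i, hat ((x j - gridKnot d h r v m j) / (h * r j)) := by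
  rw [psi, ← Finset.mul_prod_erase _ _ (Finset.mem_univ i)]
  congr 1
  · simp
  · refine Finset.prod_congr rfl fun j hj => ?_
    simp [(Finset.mem_erase.1 hj).1]

lemma chiPlus_sub_single (x : Fin d → ℝ) :
    chiPlus d h r v (m - Pi.single i 1) i x =
      (if gridKnot d h r v m i - r i * h ≤ x i ∧ x i < gridKnot d h r v m i then 1 else 0) *
        ∏ j ∈ Finset.univ.erase i, hat ((x j - gridKnot d h r v m j) / (h * r j)) := by
  rw [chiPlus, gridKnot_sub_single_self, sub_add_cancel]
  congr 1
  refine Finset.prod_congr rfl fun j hj => ?_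
  rw [gridKnot_sub_single_of_ne (Finset.mem_erase.1 hj).1]

lemma hasLineDerivAt_psi (hh : 0 < h) (hr : 0 < r i) {x : Fin d → ℝ}
    (hx : ∀ n : ℤ, x i ≠ v i + h * r i * n) :
    HasLineDerivAt ℝ (psi d h r v m)
      ((chiPlus d h r v (m - Pi.single i 1) i x - chiPlus d h r v m i x) / (r i * h))
      x (Pi.single i 1) := by
  set K := gridKnot d h r v m i
  have hc : 0 < h * r i := mul_pos hh (Nat.cast_pos.2 hr)
  have hs : ∀ n : ℤ, (x i - K) / (h * r i) ≠ n := fun n hn => by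
    refine hx (m i + n) ?_
    rw [div_eq_iff hc.ne'] at hn
    simp only [K, gridKnot] at hn
    push_cast
    linarith
  have hline : HasDerivAt (fun t => (x i + t - K) / (h * r i)) (1 / (h * r i)) 0 := by
    simpa using (((hasDerivAt_id (0 : ℝ)).const_add (x i)).sub_const K).div_const (h * r i)
  have hpsi := ((hasDerivAt_hat hs).comp_of_eq 0 hline (by simp)).mul_const
    (∏ j ∈ Finset.univ.erase i, hat ((x j - gridKnot d h r v m j) / (h * r j)))
  refine (hpsi.congr_deriv ?_).congr_of_eventuallyEq
    (.of_forall fun t => psi_add_smul_single x t)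
  rw [chiPlus_sub_single, chiPlus, hatDeriv_sub_div hc, mul_comm (r i : ℝ) h]
  ring

end Grid

theorem imbed_partialDeriv_general (d : ℕ) (h : ℝ) (hh : 0 < h)
    (r : Fin d → ℕ) (hr : ∀ i, 0 < r i) (v : Fin d → ℝ)
    (u : (Fin d → ℤ) → ℝ) (hu : (Function.support u).Finite) (i : Fin d) :
    ∀ᵐ x ∂(volume : Measure (Fin d → ℝ)),
      HasLineDerivAt ℝ (imbed d h r v u)
        (∑' m : Fin d → ℤ, fdiff d h r u i m * chiPlus d h r v m i x) x (Pi.single i 1) := by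
  filter_upwards [ae_forall_apply_ne i fun n : ℤ => v i + h * r i * n] with x hx
  have hderiv := hasLineDerivAt_tsum_mul hu fun m => hasLineDerivAt_psi (m := m) hh (hr i) hx
  have hbyparts : ∑' m, fdiff d h r u i m * chiPlus d h r v m i x = ∑' m, u m *
      ((chiPlus d h r v (m - Pi.single i 1) i x - chiPlus d h r v m i x) / (r i * h)) := by
    simp only [fdiff, mul_div_assoc', div_mul_eq_mul_div, tsum_div_const]
    rw [tsum_mul_sub_shift_eq hu fun m => chiPlus d h r v m i x]
  rw [hbyparts]
  exact hderiv

/-- Formula (6.8): for almost every `x`, the `i`-th partial derivative of the hat-function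
imbedding `u(n)` equals `Σ_m (U_i u)_m χ_{m,i,+}(x)`. -/
theorem imbed_partialDeriv (d : ℕ) (hd : 1 ≤ d) (h : ℝ) (hh : 0 < h)
    (r : Fin d → ℕ) (hr : ∀ i, 0 < r i) (v : Fin d → ℝ)
    (u : (Fin d → ℤ) → ℝ) (hu : (Function.support u).Finite) (i : Fin d) :
    ∀ᵐ x ∂(volume : Measure (Fin d → ℝ)),
      HasLineDerivAt ℝ (imbed d h r v u)
        (∑' m : Fin d → ℤ, fdiff d h r u i m * chiPlus d h r v m i x) x (Pi.single i 1) :=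
  imbed_partialDeriv_general d h hh r hr v u hu i
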